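/- Let ε > 0, c ≥ 0, and let M be a matrix game with value v. Consider a repeated game with error cε relative to M, and suppose both players' average regrets with respect to the observed payoffs satisfy limsup_{t→∞} r(t) ≤ ε and limsup_{t→∞} r₂(t) ≤ ε. Then the average observed payoff satisfies v − (c+1)ε ≤ liminf_{t→∞} g(t) ≤ limsup_{t→∞} g(t) ≤ v + (c+1)ε. -/

import Mathlib

open Filter Finset

noncomputable section

/-- A mixed strategy: a probability vector over `Fin k`. -/
def IsMixed {k : ℕ} (σ : Fin k → ℝ) : Prop :=
  (∀ i, 0 ≤ σ i) ∧ ∑ i, σ i = 1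

/-- Expected payoff `σ₁ M σ₂` to player 1. -/
def pay {m n : ℕ} (M : Fin m → Fin n → ℝ) (σ₁ : Fin m → ℝ) (σ₂ : Fin n → ℝ) : ℝ :=
  ∑ i, ∑ j, σ₁ i * M i j * σ₂ j

/-- `u(br, σ₂) = max_{σ₁} σ₁ M σ₂`. -/
def brVal1 {m n : ℕ} (M : Fin m → Fin n → ℝ) (σ₂ : Fin n → ℝ) : ℝ :=
  sSup {x : ℝ | ∃ σ₁, IsMixed σ₁ ∧ x = pay M σ₁ σ₂}

/-- `u(σ₁, br) = min_{σ₂} σ₁ M σ₂`. -/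
def brVal2 {m n : ℕ} (M : Fin m → Fin n → ℝ) (σ₁ : Fin m → ℝ) : ℝ :=
  sInf {x : ℝ | ∃ σ₂, IsMixed σ₂ ∧ x = pay M σ₁ σ₂}

/-- `M` has value `v`: `max_{σ₁} min_{σ₂} σ₁ M σ₂ = min_{σ₂} max_{σ₁} σ₁ M σ₂ = v`. -/
def HasValue {m n : ℕ} (M : Fin m → Fin n → ℝ) (v : ℝ) : Prop :=
  sSup {x : ℝ | ∃ σ₁, IsMixed σ₁ ∧ x = brVal2 M σ₁} = v ∧
  sInf {x : ℝ | ∃ σ₂, IsMixed σ₂ ∧ x = brVal1 M σ₂} = v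

/-- `(σ₁, σ₂)` is an `ε`-equilibrium of `M`. -/
def IsEpsEquilibrium {m n : ℕ} (M : Fin m → Fin n → ℝ) (ε : ℝ)
    (σ₁ : Fin m → ℝ) (σ₂ : Fin n → ℝ) : Prop :=
  brVal1 M σ₂ - pay M σ₁ σ₂ ≤ ε ∧ pay M σ₁ σ₂ - brVal2 M σ₁ ≤ ε

/-- Empirical frequencies of the action sequence `a` over steps `1, …, t`. -/
def empFreq {k : ℕ} (a : ℕ → Fin k) (t : ℕ) : Fin k → ℝ :=
  fun x => (((Finset.Icc 1 t).filter (fun s => a s = x)).card : ℝ) / t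

/-- `g(t)`: average payoff to player 1 over steps `1, …, t`. -/
def avgPay {m n : ℕ} (M : Fin (m+1) → Fin (n+1) → ℝ)
    (iseq : ℕ → Fin (m+1)) (jseq : ℕ → Fin (n+1)) (t : ℕ) : ℝ :=
  (∑ s ∈ Finset.Icc 1 t, M (iseq s) (jseq s)) / t

/-- `g_max(t)`: maximal average payoff over player 1's pure actions. -/
def gmax {m n : ℕ} (M : Fin (m+1) → Fin (n+1) → ℝ)
    (jseq : ℕ → Fin (n+1)) (t : ℕ) : ℝ :=
  (Finset.univ.sup' Finset.univ_nonempty (fun i => ∑ s ∈ Finset.Icc 1 t, M i (jseq s))) / t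

/-- `r(t)`: average regret of player 1. -/
def regret1 {m n : ℕ} (M : Fin (m+1) → Fin (n+1) → ℝ)
    (iseq : ℕ → Fin (m+1)) (jseq : ℕ → Fin (n+1)) (t : ℕ) : ℝ :=
  gmax M jseq t - avgPay M iseq jseq t

/-- `r₂(t)`: average regret of player 2 (whose payoffs are `1 - a_{ij}`). -/
def regret2 {m n : ℕ} (M : Fin (m+1) → Fin (n+1) → ℝ)
    (iseq : ℕ → Fin (m+1)) (jseq : ℕ → Fin (n+1)) (t : ℕ) : ℝ :=
  (Finset.univ.sup' Finset.univ_nonempty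
      (fun j => ∑ s ∈ Finset.Icc 1 t, (1 - M (iseq s) j))) / t -
    (∑ s ∈ Finset.Icc 1 t, (1 - M (iseq s) (jseq s))) / t

/-- `g(t)`: average observed payoff over steps `1, …, t`. -/
def avgObs {m n : ℕ} (aobs : ℕ → Fin (m+1) → Fin (n+1) → ℝ)
    (iseq : ℕ → Fin (m+1)) (jseq : ℕ → Fin (n+1)) (t : ℕ) : ℝ :=
  (∑ s ∈ Finset.Icc 1 t, aobs s (iseq s) (jseq s)) / t

/-- `g_max(t)`: maximal average observed payoff over player 1's pure actions. -/
def gmaxObs {m n : ℕ} (aobs : ℕ → Fin (m+1) → Fin (n+1) → ℝ)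
    (jseq : ℕ → Fin (n+1)) (t : ℕ) : ℝ :=
  (Finset.univ.sup' Finset.univ_nonempty
    (fun i => ∑ s ∈ Finset.Icc 1 t, aobs s i (jseq s))) / t

/-- `r(t)`: player 1's average regret with respect to the observed payoffs. -/
def regretObs1 {m n : ℕ} (aobs : ℕ → Fin (m+1) → Fin (n+1) → ℝ)
    (iseq : ℕ → Fin (m+1)) (jseq : ℕ → Fin (n+1)) (t : ℕ) : ℝ :=
  gmaxObs aobs jseq t - avgObs aobs iseq jseq t

/-- `r₂(t)`: player 2's average regret with respect to the observed payoffs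
`1 - a_{ij}(s)`. -/
def regretObs2 {m n : ℕ} (aobs : ℕ → Fin (m+1) → Fin (n+1) → ℝ)
    (iseq : ℕ → Fin (m+1)) (jseq : ℕ → Fin (n+1)) (t : ℕ) : ℝ :=
  (Finset.univ.sup' Finset.univ_nonempty
      (fun j => ∑ s ∈ Finset.Icc 1 t, (1 - aobs s (iseq s) j))) / t -
    (∑ s ∈ Finset.Icc 1 t, (1 - aobs s (iseq s) (jseq s))) / t

/-- The observed payoffs `aobs` form a repeated game with error `η` relative to `M`,
with error threshold time `t₀`. -/
def ErrorBoundedFrom {m n : ℕ} (aobs : ℕ → Fin (m+1) → Fin (n+1) → ℝ)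
    (M : Fin (m+1) → Fin (n+1) → ℝ) (η : ℝ) (t₀ : ℕ) : Prop :=
  ∀ s, t₀ ≤ s → ∀ i j, |aobs s i j - M i j| < η

section Aux

variable {m n : ℕ}

/-- pure strategy -/
def pureStrat {k : ℕ} (i : Fin k) : Fin k → ℝ := fun i' => if i' = i then 1 else 0

lemma isMixed_pure {k : ℕ} (i : Fin k) : IsMixed (pureStrat i) := by
  constructor
  · intro i'; unfold pureStrat; split <;> norm_num
  · simp [pureStrat]

lemma pay_nonneg {M : Fin m → Fin n → ℝ} (hM : ∀ i j, M i j ∈ Set.Icc (0:ℝ) 1)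
    {σ₁ : Fin m → ℝ} {σ₂ : Fin n → ℝ} (h1 : IsMixed σ₁) (h2 : IsMixed σ₂) :
    0 ≤ pay M σ₁ σ₂ := by
  refine Finset.sum_nonneg fun i _ => Finset.sum_nonneg fun j _ => ?_
  exact mul_nonneg (mul_nonneg (h1.1 i) (hM i j).1) (h2.1 j)

lemma pay_le_one {M : Fin m → Fin n → ℝ} (hM : ∀ i j, M i j ∈ Set.Icc (0:ℝ) 1)
    {σ₁ : Fin m → ℝ} {σ₂ : Fin n → ℝ} (h1 : IsMixed σ₁) (h2 : IsMixed σ₂) :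
    pay M σ₁ σ₂ ≤ 1 := by
  have : pay M σ₁ σ₂ ≤ ∑ i, ∑ j, σ₁ i * σ₂ j := by
    refine Finset.sum_le_sum fun i _ => Finset.sum_le_sum fun j _ => ?_
    have h3 := mul_nonneg (h1.1 i) (h2.1 j)
    have h4 := (hM i j).2
    nlinarith
  calc pay M σ₁ σ₂ ≤ ∑ i, ∑ j, σ₁ i * σ₂ j := this
    _ = (∑ i, σ₁ i) * (∑ j, σ₂ j) := by rw [Finset.sum_mul_sum]
    _ = 1 := by rw [h1.2, h2.2, one_mul]

lemma pay_pure_left {M : Fin m → Fin n → ℝ} (i : Fin m) (σ₂ : Fin n → ℝ) :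
    pay M (pureStrat i) σ₂ = ∑ j, M i j * σ₂ j := by
  unfold pay pureStrat
  rw [Finset.sum_eq_single i]
  · simp
  · intro b _ hb; simp [hb]
  · simp

lemma pay_pure_right {M : Fin m → Fin n → ℝ} (σ₁ : Fin m → ℝ) (j : Fin n) :
    pay M σ₁ (pureStrat j) = ∑ i, σ₁ i * M i j := by
  unfold pay pureStrat
  refine Finset.sum_congr rfl fun i _ => ?_
  rw [Finset.sum_eq_single j]
  · simp
  · intro b _ hb; simp [hb]
  · simp

/-- Key value bound 1: for any mixed σ₂, the best pure response of player 1 gets at least v. -/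
lemma value_le_sup {M : Fin (m+1) → Fin (n+1) → ℝ} {v : ℝ}
    (hM : ∀ i j, M i j ∈ Set.Icc (0:ℝ) 1) (hv : HasValue M v)
    {σ₂ : Fin (n+1) → ℝ} (h2 : IsMixed σ₂) :
    v ≤ Finset.univ.sup' Finset.univ_nonempty (fun i => ∑ j, M i j * σ₂ j) := by
  set T := Finset.univ.sup' Finset.univ_nonempty (fun i => ∑ j, M i j * σ₂ j) with hT
  have hbr : brVal1 M σ₂ ≤ T := by
    apply csSup_le
    · exact ⟨pay M (pureStrat 0) σ₂, pureStrat 0, isMixed_pure 0, rfl⟩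
    · rintro x ⟨σ₁, h1, rfl⟩
      have : pay M σ₁ σ₂ = ∑ i, σ₁ i * (∑ j, M i j * σ₂ j) := by
        unfold pay; refine Finset.sum_congr rfl fun i _ => ?_
        rw [Finset.mul_sum]
        exact Finset.sum_congr rfl fun j _ => mul_assoc _ _ _
      rw [this]
      calc ∑ i, σ₁ i * (∑ j, M i j * σ₂ j) ≤ ∑ i, σ₁ i * T := by
            refine Finset.sum_le_sum fun i _ => ?_
            exact mul_le_mul_of_nonneg_left
              (Finset.le_sup' (fun i => ∑ j, M i j * σ₂ j) (Finset.mem_univ i)) (h1.1 i)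
        _ = T := by rw [← Finset.sum_mul, h1.2, one_mul]
  have hmem : brVal1 M σ₂ ∈ {x : ℝ | ∃ σ₂, IsMixed σ₂ ∧ x = brVal1 M σ₂} := ⟨σ₂, h2, rfl⟩
  have hbdd : BddBelow {x : ℝ | ∃ σ₂, IsMixed σ₂ ∧ x = brVal1 M σ₂} := by
    refine ⟨0, ?_⟩
    rintro x ⟨σ₂', h2', rfl⟩
    have : pay M (pureStrat 0) σ₂' ≤ brVal1 M σ₂' := by
      apply le_csSup
      · exact ⟨1, by rintro y ⟨σ₁, h1, rfl⟩; exact pay_le_one hM h1 h2'⟩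
      · exact ⟨pureStrat 0, isMixed_pure 0, rfl⟩
    exact le_trans (pay_nonneg hM (isMixed_pure 0) h2') this
  calc v = sInf {x : ℝ | ∃ σ₂, IsMixed σ₂ ∧ x = brVal1 M σ₂} := hv.2.symm
    _ ≤ brVal1 M σ₂ := csInf_le hbdd hmem
    _ ≤ T := hbr

/-- Key value bound 2: for any mixed σ₁, the best pure response of player 2 holds 1 to at most v. -/
lemma inf_le_value {M : Fin (m+1) → Fin (n+1) → ℝ} {v : ℝ}
    (hM : ∀ i j, M i j ∈ Set.Icc (0:ℝ) 1) (hv : HasValue M v)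
    {σ₁ : Fin (m+1) → ℝ} (h1 : IsMixed σ₁) :
    Finset.univ.inf' Finset.univ_nonempty (fun j => ∑ i, σ₁ i * M i j) ≤ v := by
  set T := Finset.univ.inf' Finset.univ_nonempty (fun j => ∑ i, σ₁ i * M i j) with hT
  have hbr : T ≤ brVal2 M σ₁ := by
    apply le_csInf
    · exact ⟨pay M σ₁ (pureStrat 0), pureStrat 0, isMixed_pure 0, rfl⟩
    · rintro x ⟨σ₂, h2, rfl⟩
      have : pay M σ₁ σ₂ = ∑ j, (∑ i, σ₁ i * M i j) * σ₂ j := by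
        unfold pay; rw [Finset.sum_comm]
        refine Finset.sum_congr rfl fun j _ => ?_
        rw [Finset.sum_mul]
      rw [this]
      calc T = T * 1 := (mul_one T).symm
        _ = ∑ j, T * σ₂ j := by rw [← Finset.mul_sum, h2.2]
        _ ≤ ∑ j, (∑ i, σ₁ i * M i j) * σ₂ j := by
            refine Finset.sum_le_sum fun j _ => ?_
            exact mul_le_mul_of_nonneg_right
              (Finset.inf'_le (fun j => ∑ i, σ₁ i * M i j) (Finset.mem_univ j)) (h2.1 j)
  have hmem : brVal2 M σ₁ ∈ {x : ℝ | ∃ σ₁, IsMixed σ₁ ∧ x = brVal2 M σ₁} := ⟨σ₁, h1, rfl⟩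
  have hbdd : BddAbove {x : ℝ | ∃ σ₁, IsMixed σ₁ ∧ x = brVal2 M σ₁} := by
    refine ⟨1, ?_⟩
    rintro x ⟨σ₁', h1', rfl⟩
    have : brVal2 M σ₁' ≤ pay M σ₁' (pureStrat 0) := by
      apply csInf_le
      · exact ⟨0, by rintro y ⟨σ₂, h2, rfl⟩; exact pay_nonneg hM h1' h2⟩
      · exact ⟨pureStrat 0, isMixed_pure 0, rfl⟩
    exact le_trans this (pay_le_one hM h1' (isMixed_pure 0))
  calc T ≤ brVal2 M σ₁ := hbr
    _ ≤ sSup {x : ℝ | ∃ σ₁, IsMixed σ₁ ∧ x = brVal2 M σ₁} := le_csSup hbdd hmem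
    _ = v := hv.1

lemma empFreq_isMixed {k : ℕ} (a : ℕ → Fin k) {t : ℕ} (ht : 1 ≤ t) :
    IsMixed (empFreq a t) := by
  constructor
  · intro x; exact div_nonneg (Nat.cast_nonneg _) (Nat.cast_nonneg _)
  · unfold empFreq
    rw [← Finset.sum_div]
    rw [div_eq_one_iff_eq (by positivity : ((t:ℝ)) ≠ 0)]
    rw [← Nat.cast_sum]
    norm_cast
    rw [← Finset.card_eq_sum_card_fiberwise (fun s _ => Finset.mem_univ (a s))]
    simp [Nat.card_Icc, ht]

lemma sum_comp_eq {k : ℕ} (a : ℕ → Fin k) (t : ℕ) (f : Fin k → ℝ) :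
    ∑ s ∈ Finset.Icc 1 t, f (a s)
      = ∑ x, (((Finset.Icc 1 t).filter (fun s => a s = x)).card : ℝ) * f x := by
  rw [← Finset.sum_fiberwise' (Finset.Icc 1 t) a f]
  refine Finset.sum_congr rfl fun x _ => ?_
  rw [Finset.sum_const, nsmul_eq_mul]

/-- error accumulation bound -/
lemma sum_err {t₀ t : ℕ} {η : ℝ} (hη : 0 ≤ η) {a b : ℕ → ℝ}
    (ha : ∀ s, a s ∈ Set.Icc (0:ℝ) 1) (hb : ∀ s, b s ∈ Set.Icc (0:ℝ) 1)
    (h : ∀ s, t₀ ≤ s → |a s - b s| < η) :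
    ∑ s ∈ Finset.Icc 1 t, b s - ∑ s ∈ Finset.Icc 1 t, a s ≤ η * t + t₀ := by
  rw [← Finset.sum_sub_distrib]
  have key : ∀ s ∈ Finset.Icc 1 t, b s - a s ≤ η + (if s < t₀ then (1:ℝ) else 0) := by
    intro s _
    by_cases hs : s < t₀
    · simp only [hs, if_true]
      have := (ha s).1; have := (hb s).2; linarith
    · simp only [hs, if_false, add_zero]
      have := h s (le_of_not_gt hs)
      have := abs_lt.mp this
      linarith [this.1]
  calc ∑ s ∈ Finset.Icc 1 t, (b s - a s)
      ≤ ∑ s ∈ Finset.Icc 1 t, (η + (if s < t₀ then (1:ℝ) else 0)) := Finset.sum_le_sum key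
    _ = η * t + ∑ s ∈ Finset.Icc 1 t, (if s < t₀ then (1:ℝ) else 0) := by
        rw [Finset.sum_add_distrib, Finset.sum_const, Nat.card_Icc]
        simp [mul_comm]
    _ ≤ η * t + t₀ := by
        gcongr
        rw [Finset.sum_boole]
        have : ((Finset.Icc 1 t).filter (fun s => s < t₀)) ⊆ Finset.range t₀ := by
          intro s hs
          exact Finset.mem_range.mpr (Finset.mem_filter.mp hs).2
        calc (((Finset.Icc 1 t).filter (fun s => s < t₀)).card : ℝ)
            ≤ ((Finset.range t₀).card : ℝ) := by exact_mod_cast Finset.card_le_card this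
          _ = t₀ := by simp

end Aux

/-- In a repeated game with error `cε`, if both players' average regrets with
respect to the observed payoffs satisfy `limsup r(t) ≤ ε`, then the average observed payoff
satisfies `v − (c+1)ε ≤ liminf g(t) ≤ limsup g(t) ≤ v + (c+1)ε`. -/
theorem error_game_avg_payoff_bounds (m n : ℕ) (M : Fin (m+1) → Fin (n+1) → ℝ)
    (hM : ∀ i j, M i j ∈ Set.Icc (0:ℝ) 1)
    (v ε c : ℝ) (hε : 0 < ε) (hc : 0 ≤ c) (hv : HasValue M v)
    (aobs : ℕ → Fin (m+1) → Fin (n+1) → ℝ)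
    (haobs : ∀ s i j, aobs s i j ∈ Set.Icc (0:ℝ) 1)
    (herr : ∃ t₀ : ℕ, ErrorBoundedFrom aobs M (c * ε) t₀)
    (iseq : ℕ → Fin (m+1)) (jseq : ℕ → Fin (n+1))
    (hr1 : Filter.limsup (fun t => regretObs1 aobs iseq jseq t) Filter.atTop ≤ ε)
    (hr2 : Filter.limsup (fun t => regretObs2 aobs iseq jseq t) Filter.atTop ≤ ε) :
    v - (c + 1) * ε ≤ Filter.liminf (fun t => avgObs aobs iseq jseq t) Filter.atTop ∧
      Filter.liminf (fun t => avgObs aobs iseq jseq t) Filter.atTop ≤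
        Filter.limsup (fun t => avgObs aobs iseq jseq t) Filter.atTop ∧
      Filter.limsup (fun t => avgObs aobs iseq jseq t) Filter.atTop ≤ v + (c + 1) * ε := by
  obtain ⟨t₀, herr⟩ := herr
  have hcε : (0:ℝ) ≤ c * ε := mul_nonneg hc hε.le
  -- basic bounds
  have havg0 : ∀ t, 0 ≤ avgObs aobs iseq jseq t := fun t =>
    div_nonneg (Finset.sum_nonneg fun s _ => (haobs s _ _).1) (Nat.cast_nonneg t)
  have hsum_le : ∀ (t : ℕ) (f : ℕ → ℝ), (∀ s, f s ≤ 1) →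
      ∑ s ∈ Finset.Icc 1 t, f s ≤ (t : ℝ) := by
    intro t f hf
    calc ∑ s ∈ Finset.Icc 1 t, f s ≤ ∑ s ∈ Finset.Icc 1 t, (1:ℝ) :=
        Finset.sum_le_sum fun s _ => hf s
      _ = (t : ℝ) := by rw [Finset.sum_const, Nat.card_Icc]; simp
  have havg1 : ∀ t, avgObs aobs iseq jseq t ≤ 1 := by
    intro t
    unfold avgObs
    rcases Nat.eq_zero_or_pos t with h | h
    · subst h; simp
    · have htpos : (0:ℝ) < t := by exact_mod_cast h
      rw [div_le_one htpos]
      exact hsum_le t _ (fun s => (haobs s _ _).2)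
  have hgmax1 : ∀ t, gmaxObs aobs jseq t ≤ 1 := by
    intro t
    unfold gmaxObs
    rcases Nat.eq_zero_or_pos t with h | h
    · subst h; simp
    · have htpos : (0:ℝ) < t := by exact_mod_cast h
      rw [div_le_one htpos]
      exact Finset.sup'_le _ _ fun i _ => hsum_le t _ (fun s => (haobs s _ _).2)
  have hr1b : ∀ t, regretObs1 aobs iseq jseq t ≤ 1 := by
    intro t; unfold regretObs1; linarith [hgmax1 t, havg0 t]
  have hr2b : ∀ t, regretObs2 aobs iseq jseq t ≤ 1 := by
    intro t
    unfold regretObs2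
    rcases Nat.eq_zero_or_pos t with h | h
    · subst h; simp
    · have htpos : (0:ℝ) < t := by exact_mod_cast h
      have h1 : Finset.univ.sup' Finset.univ_nonempty
          (fun j => ∑ s ∈ Finset.Icc 1 t, (1 - aobs s (iseq s) j)) / t ≤ 1 := by
        rw [div_le_one htpos]
        exact Finset.sup'_le _ _ fun j _ =>
          hsum_le t _ (fun s => by linarith [(haobs s (iseq s) j).1])
      have h2 : (0:ℝ) ≤ (∑ s ∈ Finset.Icc 1 t, (1 - aobs s (iseq s) (jseq s))) / t :=
        div_nonneg (Finset.sum_nonneg fun s _ => by linarith [(haobs s (iseq s) (jseq s)).2])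
          htpos.le
      linarith
  -- key pointwise bounds
  have key1 : ∀ t : ℕ, 1 ≤ t →
      v - c * ε - (t₀:ℝ)/t - regretObs1 aobs iseq jseq t ≤ avgObs aobs iseq jseq t := by
    intro t ht
    have htpos : (0:ℝ) < t := by exact_mod_cast ht
    obtain ⟨i0, -, hi0⟩ := Finset.exists_mem_eq_sup' Finset.univ_nonempty
      (fun i => ∑ j, M i j * empFreq jseq t j)
    have h1 : v ≤ ∑ j, M i0 j * empFreq jseq t j := by
      rw [← hi0]; exact value_le_sup hM hv (empFreq_isMixed jseq ht)
    have h2 : (∑ s ∈ Finset.Icc 1 t, M i0 (jseq s)) / t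
        = ∑ j, M i0 j * empFreq jseq t j := by
      rw [sum_comp_eq jseq t (fun j => M i0 j), Finset.sum_div]
      exact Finset.sum_congr rfl fun j _ => by unfold empFreq; ring
    have h3 : (t:ℝ) * v ≤ ∑ s ∈ Finset.Icc 1 t, M i0 (jseq s) := by
      rw [← h2, le_div_iff₀ htpos] at h1; linarith
    have h4 : ∑ s ∈ Finset.Icc 1 t, M i0 (jseq s)
        - ∑ s ∈ Finset.Icc 1 t, aobs s i0 (jseq s) ≤ c * ε * t + t₀ :=
      sum_err hcε (fun s => haobs s i0 (jseq s)) (fun s => hM i0 (jseq s))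
        (fun s hs => herr s hs i0 (jseq s))
    have h5 : ∑ s ∈ Finset.Icc 1 t, aobs s i0 (jseq s)
        ≤ Finset.univ.sup' Finset.univ_nonempty
            (fun i => ∑ s ∈ Finset.Icc 1 t, aobs s i (jseq s)) :=
      Finset.le_sup' (fun i => ∑ s ∈ Finset.Icc 1 t, aobs s i (jseq s)) (Finset.mem_univ i0)
    have h6 : v - c * ε - (t₀:ℝ)/t ≤ gmaxObs aobs jseq t := by
      unfold gmaxObs
      rw [le_div_iff₀ htpos]
      have c1 : (t₀:ℝ)/t * t = t₀ := div_mul_cancel₀ _ htpos.ne'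
      have expand : (v - c * ε - (t₀:ℝ)/t) * t = v * t - c * ε * t - (t₀:ℝ)/t * t := by ring
      rw [expand, c1]
      nlinarith
    unfold regretObs1 at *
    linarith
  have key2 : ∀ t : ℕ, 1 ≤ t →
      avgObs aobs iseq jseq t ≤ v + c * ε + (t₀:ℝ)/t + regretObs2 aobs iseq jseq t := by
    intro t ht
    have htpos : (0:ℝ) < t := by exact_mod_cast ht
    obtain ⟨j0, -, hj0⟩ := Finset.exists_mem_eq_inf' Finset.univ_nonempty
      (fun j => ∑ i, empFreq iseq t i * M i j)
    have h1 : ∑ i, empFreq iseq t i * M i j0 ≤ v := by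
      rw [← hj0]; exact inf_le_value hM hv (empFreq_isMixed iseq ht)
    have h2 : (∑ s ∈ Finset.Icc 1 t, M (iseq s) j0) / t
        = ∑ i, empFreq iseq t i * M i j0 := by
      rw [sum_comp_eq iseq t (fun i => M i j0), Finset.sum_div]
      exact Finset.sum_congr rfl fun i _ => by unfold empFreq; ring
    have h3 : ∑ s ∈ Finset.Icc 1 t, M (iseq s) j0 ≤ (t:ℝ) * v := by
      rw [← h2, div_le_iff₀ htpos] at h1; linarith
    have h4 : ∑ s ∈ Finset.Icc 1 t, (1 - M (iseq s) j0)
        - ∑ s ∈ Finset.Icc 1 t, (1 - aobs s (iseq s) j0) ≤ c * ε * t + t₀ := by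
      refine sum_err hcε
        (fun s => ⟨by linarith [(haobs s (iseq s) j0).2], by linarith [(haobs s (iseq s) j0).1]⟩)
        (fun s => ⟨by linarith [(hM (iseq s) j0).2], by linarith [(hM (iseq s) j0).1]⟩)
        (fun s hs => ?_)
      have he : (1 - aobs s (iseq s) j0) - (1 - M (iseq s) j0)
          = -(aobs s (iseq s) j0 - M (iseq s) j0) := by ring
      rw [he, abs_neg]
      exact herr s hs (iseq s) j0
    have h5 : ∑ s ∈ Finset.Icc 1 t, (1 - aobs s (iseq s) j0)
        ≤ Finset.univ.sup' Finset.univ_nonempty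
            (fun j => ∑ s ∈ Finset.Icc 1 t, (1 - aobs s (iseq s) j)) :=
      Finset.le_sup' (fun j => ∑ s ∈ Finset.Icc 1 t, (1 - aobs s (iseq s) j)) (Finset.mem_univ j0)
    have hsum1 : ∑ s ∈ Finset.Icc 1 t, (1 - M (iseq s) j0)
        = (t:ℝ) - ∑ s ∈ Finset.Icc 1 t, M (iseq s) j0 := by
      rw [Finset.sum_sub_distrib, Finset.sum_const, Nat.card_Icc]; simp
    have hsum2 : ∑ s ∈ Finset.Icc 1 t, (1 - aobs s (iseq s) (jseq s))
        = (t:ℝ) - ∑ s ∈ Finset.Icc 1 t, aobs s (iseq s) (jseq s) := by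
      rw [Finset.sum_sub_distrib, Finset.sum_const, Nat.card_Icc]; simp
    unfold avgObs regretObs2
    rw [hsum2]
    set S := ∑ s ∈ Finset.Icc 1 t, aobs s (iseq s) (jseq s) with hS
    set Q := Finset.univ.sup' Finset.univ_nonempty
      (fun j => ∑ s ∈ Finset.Icc 1 t, (1 - aobs s (iseq s) j)) with hQ
    rw [div_le_iff₀ htpos]
    have c1 : (t₀:ℝ)/t * t = t₀ := div_mul_cancel₀ _ htpos.ne'
    have c2 : Q/t * t = Q := div_mul_cancel₀ _ htpos.ne'
    have c3 : ((t:ℝ) - S)/t * t = (t:ℝ) - S := div_mul_cancel₀ _ htpos.ne'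
    have expand : (v + c * ε + (t₀:ℝ)/t + (Q/t - ((t:ℝ) - S)/t)) * t
        = v * t + c * ε * t + (t₀:ℝ)/t * t + Q/t * t - ((t:ℝ) - S)/t * t := by ring
    rw [expand, c1, c2, c3]
    have hineq : (t:ℝ) - (t:ℝ) * v - c * ε * t - t₀ ≤ Q := by
      rw [hsum1] at h4
      linarith
    linarith
  -- boundedness data
  have hBle : Filter.IsBoundedUnder (· ≤ ·) Filter.atTop (fun t => avgObs aobs iseq jseq t) :=
    Filter.isBoundedUnder_of ⟨1, havg1⟩
  have hBge : Filter.IsBoundedUnder (· ≥ ·) Filter.atTop (fun t => avgObs aobs iseq jseq t) :=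
    Filter.isBoundedUnder_of ⟨0, havg0⟩
  have hBr1 : Filter.IsBoundedUnder (· ≤ ·) Filter.atTop
      (fun t => regretObs1 aobs iseq jseq t) := Filter.isBoundedUnder_of ⟨1, hr1b⟩
  have hBr2 : Filter.IsBoundedUnder (· ≤ ·) Filter.atTop
      (fun t => regretObs2 aobs iseq jseq t) := Filter.isBoundedUnder_of ⟨1, hr2b⟩
  have hdiv : ∀ δ : ℝ, 0 < δ → ∀ᶠ t : ℕ in Filter.atTop, (t₀:ℝ)/t < δ := by
    intro δ hδ
    exact (tendsto_const_div_atTop_nhds_zero_nat (t₀:ℝ)).eventually_lt_const hδ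
  refine ⟨?_, Filter.liminf_le_limsup hBle hBge, ?_⟩
  · apply le_of_forall_sub_le
    intro δ hδ
    apply Filter.le_liminf_of_le hBle.isCoboundedUnder_ge
    have h1ev : ∀ᶠ t in Filter.atTop, regretObs1 aobs iseq jseq t < ε + δ/2 :=
      Filter.eventually_lt_of_limsup_lt (lt_of_le_of_lt hr1 (by linarith)) hBr1
    filter_upwards [h1ev, hdiv (δ/2) (by linarith), Filter.eventually_ge_atTop 1]
      with t ha hb hc
    have := key1 t hc
    linarith
  · apply le_of_forall_pos_le_add
    intro δ hδ
    apply Filter.limsup_le_of_le hBge.isCoboundedUnder_le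
    have h2ev : ∀ᶠ t in Filter.atTop, regretObs2 aobs iseq jseq t < ε + δ/2 :=
      Filter.eventually_lt_of_limsup_lt (lt_of_le_of_lt hr2 (by linarith)) hBr2
    filter_upwards [h2ev, hdiv (δ/2) (by linarith), Filter.eventually_ge_atTop 1]
      with t ha hb hc
    have := key2 t hc
    linarith
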